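/- arXiv:1711.01086 — 2 statements merged into one kernel-verified Lean document; each statement's English description precedes it below -/
import Mathlib

section
/- If G is a connected graph of order n ≥ 5 with diam(G) ≥ 3, then η_p(G) ≤ n − 2. -/
open SimpleGraph Set

/-- Distance from a vertex to a set of vertices. -/
noncomputable def pDist {V : Type*} (G : SimpleGraph V) (v : V) (S : Set V) : ℕ :=
  sInf (G.dist v '' S)

/-- A family of sets of vertices is resolving if every pair of distinct vertices
is distinguished by its distance to some part. -/
def IsResolvingFam {V : Type*} (G : SimpleGraph V) (P : Set (Set V)) : Prop :=
  ∀ u v : V, u ≠ v → ∃ S ∈ P, pDist G u S ≠ pDist G v S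

/-- A family of sets is dominating if every vertex is at distance exactly 1 from some part. -/
def IsDominatingFam {V : Type*} (G : SimpleGraph V) (P : Set (Set V)) : Prop :=
  ∀ v : V, ∃ S ∈ P, pDist G v S = 1

/-- The partition domination number: minimum cardinality of a dominating partition. -/
noncomputable def gammaP {V : Type*} (G : SimpleGraph V) : ℕ :=
  sInf {k | ∃ P : Set (Set V), Setoid.IsPartition P ∧ IsDominatingFam G P ∧ P.ncard = k}

/-- The partition dimension: minimum cardinality of a resolving partition. -/
noncomputable def betaP {V : Type*} (G : SimpleGraph V) : ℕ :=
  sInf {k | ∃ P : Set (Set V), Setoid.IsPartition P ∧ IsResolvingFam G P ∧ P.ncard = k}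

/-- The dominating partition dimension: minimum cardinality of a resolving dominating partition. -/
noncomputable def etaP {V : Type*} (G : SimpleGraph V) : ℕ :=
  sInf {k | ∃ P : Set (Set V), Setoid.IsPartition P ∧ IsResolvingFam G P ∧
    IsDominatingFam G P ∧ P.ncard = k}

/-- A resolving set of vertices. -/
def IsResolvingSet {V : Type*} (G : SimpleGraph V) (S : Set V) : Prop :=
  ∀ u v : V, u ≠ v → ∃ x ∈ S, G.dist u x ≠ G.dist v x

/-- A dominating set of vertices. -/
def IsDominatingSet {V : Type*} (G : SimpleGraph V) (S : Set V) : Prop :=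
  ∀ v : V, v ∉ S → ∃ u ∈ S, G.Adj u v

/-- The resolving domination number η(G). -/
noncomputable def etaNum {V : Type*} (G : SimpleGraph V) : ℕ :=
  sInf {k | ∃ S : Set V, IsResolvingSet G S ∧ IsDominatingSet G S ∧ S.ncard = k}

/-- A twin set: pairwise twin vertices. -/
def IsTwinSet {V : Type*} (G : SimpleGraph V) (W : Set V) : Prop :=
  ∀ u ∈ W, ∀ v ∈ W, ∀ w : V, w ≠ u → w ≠ v → G.dist u w = G.dist v w

/-- The join of two graphs. -/
def gJoin {α β : Type*} (G : SimpleGraph α) (H : SimpleGraph β) : SimpleGraph (α ⊕ β) :=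
  SimpleGraph.fromRel (fun x y =>
    (∃ a b, x = Sum.inl a ∧ y = Sum.inl b ∧ G.Adj a b) ∨
    (∃ a b, x = Sum.inr a ∧ y = Sum.inr b ∧ H.Adj a b) ∨
    (∃ a b, x = Sum.inl a ∧ y = Sum.inr b))

/-- The disjoint union of two graphs. -/
def gUnion {α β : Type*} (G : SimpleGraph α) (H : SimpleGraph β) : SimpleGraph (α ⊕ β) :=
  SimpleGraph.fromRel (fun x y =>
    (∃ a b, x = Sum.inl a ∧ y = Sum.inl b ∧ G.Adj a b) ∨
    (∃ a b, x = Sum.inr a ∧ y = Sum.inr b ∧ H.Adj a b))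


section Helpers

variable {V : Type*} {G : SimpleGraph V}

lemma pDist_le {v s : V} {S : Set V} (h : s ∈ S) : pDist G v S ≤ G.dist v s :=
  Nat.sInf_le ⟨s, h, rfl⟩

lemma pDist_singleton (G : SimpleGraph V) (v w : V) : pDist G v {w} = G.dist v w := by
  unfold pDist
  rw [Set.image_singleton, csInf_singleton]

lemma pDist_eq_zero_of_mem {v : V} {S : Set V} (h : v ∈ S) : pDist G v S = 0 :=
  Nat.le_zero.mp (le_trans (pDist_le h) (by rw [SimpleGraph.dist_self]))

lemma pDist_ne_zero (hG : G.Connected) {v : V} {S : Set V} (h : v ∉ S)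
    (hne : S.Nonempty) : pDist G v S ≠ 0 := by
  unfold pDist
  intro hzero
  rw [Nat.sInf_eq_zero] at hzero
  rcases hzero with ⟨s, hs, h0⟩ | he
  · exact h (hG.dist_eq_zero_iff.mp h0 ▸ hs)
  · exact hne.ne_empty (Set.image_eq_empty.mp he)

lemma pDist_eq_one (hG : G.Connected) {v z : V} {S : Set V} (hv : v ∉ S) (hz : z ∈ S)
    (ha : G.Adj v z) : pDist G v S = 1 := by
  have h1 : pDist G v S ≤ 1 := by
    have := pDist_le (G := G) (v := v) hz
    rwa [SimpleGraph.dist_eq_one_iff_adj.mpr ha] at this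
  have h0 : pDist G v S ≠ 0 := pDist_ne_zero hG hv ⟨z, hz⟩
  omega

lemma exists_adj [Fintype V] (hG : G.Connected) (h2 : 2 ≤ Fintype.card V) (v : V) :
    ∃ z, G.Adj v z := by
  obtain ⟨w, hw⟩ := Fintype.exists_ne_of_one_lt_card (by omega) v
  obtain ⟨p, hp⟩ := hG.exists_walk_length_eq_dist v w
  have hd : G.dist v w ≠ 0 := by
    intro h0
    exact hw.symm (hG.dist_eq_zero_iff.mp h0)
  have hnn : ¬ p.Nil := by
    rw [SimpleGraph.Walk.nil_iff_length_eq, hp]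
    exact hd
  exact ⟨p.getVert 1, SimpleGraph.Walk.adj_snd hnn⟩

lemma dist_pred (hG : G.Connected) {u v : V} {n : ℕ} (h : G.dist u v = n + 1) :
    ∃ w, G.Adj w v ∧ G.dist u w = n := by
  obtain ⟨p, hp⟩ := hG.exists_walk_length_eq_dist u v
  have hlen : p.reverse.length = n + 1 := by rw [SimpleGraph.Walk.length_reverse, hp, h]
  have hnn : ¬ p.reverse.Nil := by
    rw [SimpleGraph.Walk.nil_iff_length_eq, hlen]
    omega
  refine ⟨p.reverse.getVert 1, (SimpleGraph.Walk.adj_snd hnn).symm, ?_⟩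
  have h1 : G.dist (p.reverse.getVert 1) u ≤ n := by
    have hle := SimpleGraph.dist_le p.reverse.tail
    have hlt : p.reverse.tail.length + 1 = p.reverse.length :=
      SimpleGraph.Walk.length_tail_add_one hnn
    have hle' : G.dist (p.reverse.getVert 1) u ≤ p.reverse.tail.length := hle
    omega
  have h2 : n ≤ G.dist u (p.reverse.getVert 1) := by
    have ht := hG.dist_triangle (u := u) (v := p.reverse.getVert 1) (w := v)
    have hone : G.dist (p.reverse.getVert 1) v = 1 :=
      SimpleGraph.dist_eq_one_iff_adj.mpr (SimpleGraph.Walk.adj_snd hnn).symm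
    omega
  have := SimpleGraph.dist_comm (G := G) (u := u) (v := p.reverse.getVert 1)
  omega

lemma construction [Fintype V] (hG : G.Connected) (hn : 5 ≤ Fintype.card V)
    (x0 x1 x2 x3 y z : V)
    (h01 : G.Adj x0 x1) (h12 : G.Adj x1 x2) (h23 : G.Adj x2 x3)
    (h03 : G.dist x0 x3 = 3)
    (hy0 : y ≠ x0) (hy1 : y ≠ x1) (hy2 : y ≠ x2) (hy3 : y ≠ x3)
    (hd3 : G.dist x3 y ≠ 3)
    (hz : G.Adj y z) (hz0 : z ≠ x0) :
    etaP G ≤ Fintype.card V - 2 := by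
  classical
  have d01 : G.dist x0 x1 = 1 := SimpleGraph.dist_eq_one_iff_adj.mpr h01
  have d12 : G.dist x1 x2 = 1 := SimpleGraph.dist_eq_one_iff_adj.mpr h12
  have d23 : G.dist x2 x3 = 1 := SimpleGraph.dist_eq_one_iff_adj.mpr h23
  have t012 := hG.dist_triangle (u := x0) (v := x1) (w := x2)
  have t023 := hG.dist_triangle (u := x0) (v := x2) (w := x3)
  have t013 := hG.dist_triangle (u := x0) (v := x1) (w := x3)
  have t123 := hG.dist_triangle (u := x1) (v := x2) (w := x3)
  have d02 : G.dist x0 x2 = 2 := by omega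
  have d13 : G.dist x1 x3 = 2 := by omega
  have n01 : x0 ≠ x1 := h01.ne
  have n12 : x1 ≠ x2 := h12.ne
  have n23 : x2 ≠ x3 := h23.ne
  have n02 : x0 ≠ x2 := by
    intro h; rw [h, SimpleGraph.dist_self] at d02; omega
  have n03 : x0 ≠ x3 := by
    intro h; rw [h, SimpleGraph.dist_self] at h03; omega
  have n13 : x1 ≠ x3 := by
    intro h; rw [h, SimpleGraph.dist_self] at d13; omega
  set f : V → Set V := fun v =>
    if v = x1 ∨ v = x2 then ({x1, x2} : Set V)
    else if v = x0 ∨ v = y then ({x0, y} : Set V) else {v} with hf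
  have fx1 : f x1 = {x1, x2} := by simp [hf]
  have fx2 : f x2 = {x1, x2} := by simp [hf]
  have fx0 : f x0 = {x0, y} := by simp [hf, n01, n02]
  have fy : f y = {x0, y} := by simp [hf, hy1, hy2]
  have fother : ∀ v, v ≠ x0 → v ≠ x1 → v ≠ x2 → v ≠ y → f v = {v} := by
    intro v h0 h1 h2 hy
    simp [hf, h0, h1, h2, hy]
  have fx3 : f x3 = {x3} := fother x3 (Ne.symm n03) (Ne.symm n13) (Ne.symm n23) (Ne.symm hy3)
  have mem_f : ∀ v, v ∈ f v := by
    intro v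
    by_cases h1 : v = x1 ∨ v = x2
    · rcases h1 with h | h
      · rw [h, fx1]; exact Set.mem_insert _ _
      · rw [h, fx2]; exact Set.mem_insert_of_mem _ rfl
    · by_cases h2 : v = x0 ∨ v = y
      · rcases h2 with h | h
        · rw [h, fx0]; exact Set.mem_insert _ _
        · rw [h, fy]; exact Set.mem_insert_of_mem _ rfl
      · push_neg at h1 h2
        rw [fother v h2.1 h1.1 h1.2 h2.2]; rfl
  have f_mem_cases : ∀ w v, v ∈ f w → f v = f w := by
    intro w v hv
    by_cases h1 : w = x1 ∨ w = x2
    · have hfw : f w = {x1, x2} := by rcases h1 with h | h <;> rw [h] <;> [exact fx1; exact fx2]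
      rw [hfw] at hv ⊢
      rcases hv with h | h
      · rw [h]; exact fx1
      · rw [Set.mem_singleton_iff.mp h]; exact fx2
    · by_cases h2 : w = x0 ∨ w = y
      · have hfw : f w = {x0, y} := by rcases h2 with h | h <;> rw [h] <;> [exact fx0; exact fy]
        rw [hfw] at hv ⊢
        rcases hv with h | h
        · rw [h]; exact fx0
        · rw [Set.mem_singleton_iff.mp h]; exact fy
      · push_neg at h1 h2
        have hfw : f w = {w} := fother w h2.1 h1.1 h1.2 h2.2
        rw [hfw] at hv ⊢
        rw [Set.mem_singleton_iff.mp hv]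
        exact fother w h2.1 h1.1 h1.2 h2.2
  have hpart : Setoid.IsPartition (Set.range f) := by
    constructor
    · rintro ⟨v, hv⟩
      have := mem_f v
      rw [hv] at this
      exact this
    · intro a
      refine ⟨f a, ⟨⟨a, rfl⟩, mem_f a⟩, ?_⟩
      rintro S ⟨⟨w, rfl⟩, ha⟩
      exact (f_mem_cases w a ha).symm
  -- cardinality
  have hrange : Set.range f =
      insert ({x1, x2} : Set V) (insert ({x0, y} : Set V)
        ((fun w => ({w} : Set V)) '' ({x0, x1, x2, y} : Set V)ᶜ)) := by
    ext S
    constructor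
    · rintro ⟨v, rfl⟩
      by_cases h1 : v = x1 ∨ v = x2
      · left
        rcases h1 with h | h <;> rw [h] <;> [exact fx1; exact fx2]
      · by_cases h2 : v = x0 ∨ v = y
        · right; left
          rcases h2 with h | h <;> rw [h] <;> [exact fx0; exact fy]
        · right; right
          push_neg at h1 h2
          exact ⟨v, by simp [h1.1, h1.2, h2.1, h2.2], (fother v h2.1 h1.1 h1.2 h2.2).symm⟩
    · rintro (h | h | ⟨w, hw, h⟩)
      · exact ⟨x1, by rw [fx1, h]⟩
      · exact ⟨x0, by rw [fx0, h]⟩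
      · simp only [Set.mem_compl_iff, Set.mem_insert_iff, Set.mem_singleton_iff,
          not_or] at hw
        exact ⟨w, by rw [fother w hw.1 hw.2.1 hw.2.2.1 hw.2.2.2]; exact h⟩
  have hxy : x0 ≠ y := Ne.symm hy0
  have hcard : (Set.range f).ncard = Fintype.card V - 2 := by
    rw [hrange]
    have hA : (({x0, x1, x2, y} : Set V)ᶜ).ncard = Fintype.card V - 4 := by
      have h4 : ({x0, x1, x2, y} : Set V).ncard = 4 := by
        rw [Set.ncard_insert_of_notMem (by simp [n01, n02, hxy]),
          Set.ncard_insert_of_notMem (by simp [n12, Ne.symm hy1]),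
          Set.ncard_insert_of_notMem (by simp [Ne.symm hy2]), Set.ncard_singleton]
      have := Set.ncard_add_ncard_compl ({x0, x1, x2, y} : Set V)
      rw [Nat.card_eq_fintype_card] at this
      omega
    have hI : ((fun w => ({w} : Set V)) '' ({x0, x1, x2, y} : Set V)ᶜ).ncard
        = Fintype.card V - 4 := by
      rw [Set.ncard_image_of_injective _ Set.singleton_injective, hA]
    have hm1 : ({x0, y} : Set V) ∉ (fun w => ({w} : Set V)) '' ({x0, x1, x2, y} : Set V)ᶜ := by
      rintro ⟨w, _, hw⟩
      have hw' : ({w} : Set V) = {x0, y} := hw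
      have h0 : x0 ∈ ({w} : Set V) := by rw [hw']; exact Set.mem_insert _ _
      have h1 : y ∈ ({w} : Set V) := by rw [hw']; exact Set.mem_insert_of_mem _ rfl
      exact hxy (h0.trans h1.symm)
    have hm2 : ({x1, x2} : Set V) ∉ insert ({x0, y} : Set V)
        ((fun w => ({w} : Set V)) '' ({x0, x1, x2, y} : Set V)ᶜ) := by
      rintro (h | ⟨w, _, hw⟩)
      · have : x1 ∈ ({x0, y} : Set V) := by rw [← h]; exact Set.mem_insert _ _
        rcases this with h' | h'
        · exact n01 h'.symm
        · exact hy1 (Set.mem_singleton_iff.mp h').symm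
      · have hw' : ({w} : Set V) = {x1, x2} := hw
        have h1 : x1 ∈ ({w} : Set V) := by rw [hw']; exact Set.mem_insert _ _
        have h2 : x2 ∈ ({w} : Set V) := by rw [hw']; exact Set.mem_insert_of_mem _ rfl
        exact n12 (h1.trans h2.symm)
    rw [Set.ncard_insert_of_notMem hm2, Set.ncard_insert_of_notMem hm1, hI]
    omega
  have hres : IsResolvingFam G (Set.range f) := by
    intro u v huv
    by_cases hfe : f u = f v
    · have hvmem : v ∈ f u := by rw [hfe]; exact mem_f v
      have hcase : (u = x1 ∧ v = x2) ∨ (u = x2 ∧ v = x1) ∨ (u = x0 ∧ v = y) ∨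
          (u = y ∧ v = x0) := by
        by_cases h1 : u = x1 ∨ u = x2
        · have hfu : f u = {x1, x2} := by
            rcases h1 with h | h <;> rw [h] <;> [exact fx1; exact fx2]
          rw [hfu] at hvmem
          rcases hvmem with h' | h'
          · rcases h1 with h | h
            · exact absurd (h.trans h'.symm) huv
            · exact Or.inr (Or.inl ⟨h, h'⟩)
          · rw [Set.mem_singleton_iff] at h'
            rcases h1 with h | h
            · exact Or.inl ⟨h, h'⟩
            · exact absurd (h.trans h'.symm) huv
        · by_cases h2 : u = x0 ∨ u = y
          · have hfu : f u = {x0, y} := by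
              rcases h2 with h | h <;> rw [h] <;> [exact fx0; exact fy]
            rw [hfu] at hvmem
            rcases hvmem with h' | h'
            · rcases h2 with h | h
              · exact absurd (h.trans h'.symm) huv
              · exact Or.inr (Or.inr (Or.inr ⟨h, h'⟩))
            · rw [Set.mem_singleton_iff] at h'
              rcases h2 with h | h
              · exact Or.inr (Or.inr (Or.inl ⟨h, h'⟩))
              · exact absurd (h.trans h'.symm) huv
          · push_neg at h1 h2
            rw [fother u h2.1 h1.1 h1.2 h2.2, Set.mem_singleton_iff] at hvmem
            exact absurd hvmem.symm huv
      refine ⟨{x3}, ⟨x3, fx3⟩, ?_⟩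
      rw [pDist_singleton, pDist_singleton]
      have hd3' : G.dist y x3 ≠ 3 := by rw [SimpleGraph.dist_comm]; exact hd3
      rcases hcase with ⟨hu, hv⟩ | ⟨hu, hv⟩ | ⟨hu, hv⟩ | ⟨hu, hv⟩ <;> rw [hu, hv] <;> omega
    · refine ⟨f u, ⟨u, rfl⟩, ?_⟩
      have h0 : pDist G u (f u) = 0 := pDist_eq_zero_of_mem (mem_f u)
      have h1 : pDist G v (f u) ≠ 0 :=
        pDist_ne_zero hG (fun hvin => hfe (f_mem_cases u v hvin).symm) ⟨u, mem_f u⟩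
      rw [h0]
      exact Ne.symm h1
  have hdom : IsDominatingFam G (Set.range f) := by
    have key : ∀ v w, G.Adj v w → v ∉ f w → ∃ S ∈ Set.range f, pDist G v S = 1 :=
      fun v w ha hnot => ⟨f w, ⟨w, rfl⟩, pDist_eq_one hG hnot (mem_f w) ha⟩
    intro v
    by_cases hv0 : v = x0
    · refine key v x1 (hv0 ▸ h01) ?_
      rw [fx1, hv0]
      simp [n01, n02]
    by_cases hv1 : v = x1
    · refine key v x0 (hv1 ▸ h01.symm) ?_
      rw [fx0, hv1]
      simp [Ne.symm n01, Ne.symm hy1]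
    by_cases hv2 : v = x2
    · refine key v x3 (hv2 ▸ h23) ?_
      rw [fx3, hv2]
      simp [n23]
    by_cases hv3 : v = x3
    · refine key v x2 (hv3 ▸ h23.symm) ?_
      rw [fx2, hv3]
      simp [Ne.symm n13, Ne.symm n23]
    by_cases hvy : v = y
    · refine key v z (hvy ▸ hz) ?_
      intro hmem
      have hfz := f_mem_cases z v hmem
      by_cases hz1 : z = x1 ∨ z = x2
      · have : f z = {x1, x2} := by rcases hz1 with h | h <;> rw [h] <;> [exact fx1; exact fx2]
        rw [this] at hmem
        rcases hmem with h | h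
        · exact hy1 (hvy ▸ h)
        · exact hy2 (hvy ▸ Set.mem_singleton_iff.mp h)
      · by_cases hz2 : z = x0 ∨ z = y
        · rcases hz2 with h | h
          · exact hz0 h
          · exact hz.ne h.symm
        · push_neg at hz1 hz2
          rw [fother z hz2.1 hz1.1 hz1.2 hz2.2, Set.mem_singleton_iff] at hmem
          exact hz.ne (hvy.symm.trans hmem)
    · obtain ⟨w, hw⟩ := exists_adj hG (by omega) v
      refine key v w hw ?_
      intro hmem
      by_cases hw1 : w = x1 ∨ w = x2
      · have : f w = {x1, x2} := by rcases hw1 with h | h <;> rw [h] <;> [exact fx1; exact fx2]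
        rw [this] at hmem
        rcases hmem with h | h
        · exact hv1 h
        · exact hv2 (Set.mem_singleton_iff.mp h)
      · by_cases hw2 : w = x0 ∨ w = y
        · have : f w = {x0, y} := by rcases hw2 with h | h <;> rw [h] <;> [exact fx0; exact fy]
          rw [this] at hmem
          rcases hmem with h | h
          · exact hv0 h
          · exact hvy (Set.mem_singleton_iff.mp h)
        · push_neg at hw1 hw2
          rw [fother w hw2.1 hw1.1 hw1.2 hw2.2, Set.mem_singleton_iff] at hmem
          exact hw.ne hmem
  exact Nat.sInf_le ⟨Set.range f, hpart, hres, hdom, hcard⟩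

end Helpers

theorem stmt_13 {V : Type*} [Fintype V] (G : SimpleGraph V) (hG : G.Connected)
    (hn : 5 ≤ Fintype.card V) (hd : 3 ≤ G.diam) :
    etaP G ≤ Fintype.card V - 2 := by
  classical
  have hne : Nonempty V := Fintype.card_pos_iff.mp (by omega)
  obtain ⟨u, v, huv⟩ := SimpleGraph.exists_dist_eq_diam (G := G)
  have hk : 3 ≤ G.dist u v := huv ▸ hd
  set k := G.dist u v with hkdef
  -- build a geodesic chain x0 ~ x1 ~ x2 ~ x3 with dist x0 x3 = 3
  have hvu : G.dist v u = k := by rw [SimpleGraph.dist_comm]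
  obtain ⟨x1, hx1a, hx1d⟩ := dist_pred hG (n := k - 1) (by omega : G.dist v u = (k - 1) + 1)
  obtain ⟨x2, hx2a, hx2d⟩ := dist_pred hG (n := k - 2) (by omega : G.dist v x1 = (k - 2) + 1)
  obtain ⟨x3, hx3a, hx3d⟩ := dist_pred hG (n := k - 3) (by omega : G.dist v x2 = (k - 3) + 1)
  have h01 : G.Adj u x1 := hx1a.symm
  have h12 : G.Adj x1 x2 := hx2a.symm
  have h23 : G.Adj x2 x3 := hx3a.symm
  have d01 : G.dist u x1 = 1 := SimpleGraph.dist_eq_one_iff_adj.mpr h01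
  have d12 : G.dist x1 x2 = 1 := SimpleGraph.dist_eq_one_iff_adj.mpr h12
  have d23 : G.dist x2 x3 = 1 := SimpleGraph.dist_eq_one_iff_adj.mpr h23
  have h03 : G.dist u x3 = 3 := by
    have hle : G.dist u x3 ≤ 3 := by
      have t1 := hG.dist_triangle (u := u) (v := x1) (w := x3)
      have t2 := hG.dist_triangle (u := x1) (v := x2) (w := x3)
      omega
    have hge : 3 ≤ G.dist u x3 := by
      have t := hG.dist_triangle (u := u) (v := x3) (w := v)
      have h3v : G.dist x3 v = k - 3 := by rw [SimpleGraph.dist_comm]; exact hx3d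
      omega
    omega
  set x0 := u with hx0
  have n03 : x0 ≠ x3 := by
    intro h; rw [h, SimpleGraph.dist_self] at h03; omega
  -- there is a vertex outside the chain
  have hS4 : ∃ y, y ≠ x0 ∧ y ≠ x1 ∧ y ≠ x2 ∧ y ≠ x3 := by
    by_contra hcon
    push_neg at hcon
    have hsub : (Set.univ : Set V) ⊆ ({x0, x1, x2, x3} : Set V) := by
      intro w _
      by_cases h0 : w = x0
      · simp [h0]
      by_cases h1 : w = x1
      · simp [h1]
      by_cases h2 : w = x2
      · simp [h2]
      · simp [hcon w h0 h1 h2]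
    have hle : (Set.univ : Set V).ncard ≤ ({x0, x1, x2, x3} : Set V).ncard :=
      Set.ncard_le_ncard hsub (Set.toFinite _)
    have h4 : ({x0, x1, x2, x3} : Set V).ncard ≤ 4 := by
      apply le_trans (Set.ncard_insert_le _ _)
      have := Set.ncard_insert_le x1 ({x2, x3} : Set V)
      have := Set.ncard_insert_le x2 ({x3} : Set V)
      have := Set.ncard_singleton x3
      omega
    rw [Set.ncard_univ, Nat.card_eq_fintype_card] at hle
    omega
  -- find a suitable y and apply the construction (possibly on the reversed chain)
  by_cases hcase : ∃ y, (y ≠ x0 ∧ y ≠ x1 ∧ y ≠ x2 ∧ y ≠ x3) ∧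
      ((G.dist x3 y ≠ 3 ∧ ∃ z, G.Adj y z ∧ z ≠ x0) ∨
       (G.dist x0 y ≠ 3 ∧ ∃ z, G.Adj y z ∧ z ≠ x3))
  · obtain ⟨y, ⟨hy0, hy1, hy2, hy3⟩, hcs⟩ := hcase
    rcases hcs with ⟨hdy, z, hza, hzn⟩ | ⟨hdy, z, hza, hzn⟩
    · exact construction hG hn x0 x1 x2 x3 y z h01 h12 h23 h03 hy0 hy1 hy2 hy3 hdy hza hzn
    · exact construction hG hn x3 x2 x1 x0 y z h23.symm h12.symm h01.symm
        (by rw [SimpleGraph.dist_comm]; exact h03) hy3 hy2 hy1 hy0 hdy hza hzn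
  · exfalso
    push_neg at hcase
    -- every vertex outside the chain is at distance 3 from both x0 and x3
    have hall : ∀ y, y ≠ x0 → y ≠ x1 → y ≠ x2 → y ≠ x3 →
        G.dist x0 y = 3 ∧ G.dist x3 y = 3 := by
      intro y hy0 hy1 hy2 hy3
      obtain ⟨hc1, hc2⟩ := hcase y ⟨hy0, hy1, hy2, hy3⟩
      have haux : ∀ w : V, (∀ z, G.Adj y z → z = w) → G.Adj y w := by
        intro w hw
        obtain ⟨z', hz'⟩ := exists_adj hG (by omega) y
        have := hw z' hz'
        rwa [this] at hz'
      have h1 : G.dist x3 y = 3 := by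
        by_cases h : G.dist x3 y = 3
        · exact h
        · exfalso
          have hz' : ∀ z, G.Adj y z → z = x0 := by
            intro z hzz
            by_contra hne'
            exact hne' (hc1 h z hzz)
          have hadj0 : G.Adj y x0 := haux x0 hz'
          have hd0 : G.dist x0 y = 1 := SimpleGraph.dist_eq_one_iff_adj.mpr hadj0.symm
          have hz'' : ∀ z, G.Adj y z → z = x3 := by
            intro z hzz
            by_contra hne'
            exact hne' (hc2 (by omega) z hzz)
          exact n03 (hz'' x0 hadj0)
      have h2 : G.dist x0 y = 3 := by
        by_cases h : G.dist x0 y = 3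
        · exact h
        · exfalso
          have hz' : ∀ z, G.Adj y z → z = x3 := by
            intro z hzz
            by_contra hne'
            exact hne' (hc2 h z hzz)
          have hadj3 : G.Adj y x3 := haux x3 hz'
          have hd3' : G.dist x3 y = 1 := SimpleGraph.dist_eq_one_iff_adj.mpr hadj3.symm
          omega
      exact ⟨h2, h1⟩
    obtain ⟨y0, hy0, hy1, hy2, hy3⟩ := hS4
    obtain ⟨hd03, hd33⟩ := hall y0 hy0 hy1 hy2 hy3
    obtain ⟨w, hwa, hwd⟩ := dist_pred hG (n := 2) (by omega : G.dist x0 y0 = 2 + 1)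
    -- w is at distance 2 from x0 and adjacent to y0
    have hwx2 : w = x2 := by
      by_cases hw0 : w = x0
      · rw [hw0, SimpleGraph.dist_self] at hwd; omega
      by_cases hw1 : w = x1
      · rw [hw1, d01] at hwd; omega
      by_cases hw2 : w = x2
      · exact hw2
      by_cases hw3 : w = x3
      · rw [hw3, h03] at hwd; omega
      · obtain ⟨hw03, _⟩ := hall w hw0 hw1 hw2 hw3
        omega
    have : G.dist x3 y0 ≤ 2 := by
      have t := hG.dist_triangle (u := x3) (v := x2) (w := y0)
      have h1 : G.dist x3 x2 = 1 := SimpleGraph.dist_eq_one_iff_adj.mpr h23.symm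
      have h2 : G.dist x2 y0 = 1 := by
        rw [SimpleGraph.dist_eq_one_iff_adj]
        rw [hwx2] at hwa
        exact hwa
      omega
    omega
end

section
/- Let G be a connected graph of order n ≥ 7 with minimum degree at least n − 3 and having at most n − 5 vertices of degree n − 1. Then η_p(G) ≤ n − 3. -/
open SimpleGraph Set

set_option linter.unusedSectionVars false
set_option maxHeartbeats 1000000

section AuxStmt15

variable {V : Type*} [Fintype V] {G : SimpleGraph V}

lemma pdist_singleton (G : SimpleGraph V) (v x : V) : pDist G v {x} = G.dist v x := by
  simp only [pDist, Set.image_singleton, csInf_singleton]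

lemma pdist_zero (G : SimpleGraph V) {v : V} {S : Set V} (hv : v ∈ S) : pDist G v S = 0 :=
  Nat.sInf_eq_zero.mpr (Or.inl ⟨v, hv, SimpleGraph.dist_self⟩)

lemma pdist_ne_zero (hG : G.Connected) {v : V} {S : Set V} (hS : S.Nonempty) (hv : v ∉ S) :
    pDist G v S ≠ 0 := by
  obtain ⟨x, hx, hdx⟩ := Nat.sInf_mem (hS.image (G.dist v))
  rw [pDist, ← hdx]
  intro h0
  exact hv ((hG.dist_eq_zero_iff.mp h0) ▸ hx)

lemma pdist_one (hG : G.Connected) {v w : V} {S : Set V} (hv : v ∉ S) (hw : w ∈ S)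
    (hadj : G.Adj v w) : pDist G v S = 1 := by
  refine le_antisymm (Nat.sInf_le ⟨w, hw, SimpleGraph.dist_eq_one_iff_adj.mpr hadj⟩) ?_
  obtain ⟨x, hx, hdx⟩ := Nat.sInf_mem (Set.Nonempty.image (G.dist v) ⟨w, hw⟩)
  rw [pDist, ← hdx]
  exact hG.pos_dist_of_ne (fun h => hv (h ▸ hx))
lemma exists_common_nbr (hn : 7 ≤ Fintype.card V)
    (hmin : ∀ v : V, Fintype.card V - 3 ≤ (G.neighborSet v).ncard)
    {u v : V} (huv : u ≠ v) (hadj : ¬ G.Adj u v) :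
    ∃ w, G.Adj u w ∧ G.Adj w v := by
  by_contra h
  push_neg at h
  have hdisj : Disjoint (G.neighborSet u) (G.neighborSet v) := by
    rw [Set.disjoint_left]
    intro w hwu hwv
    exact h w hwu ((G.adj_comm v w).mp hwv)
  have hsub : G.neighborSet u ∪ G.neighborSet v ⊆ ({u, v} : Set V)ᶜ := by
    intro w hw
    simp only [Set.mem_compl_iff, Set.mem_insert_iff, Set.mem_singleton_iff]
    rintro (rfl | rfl)
    · rcases hw with hw | hw
      · exact G.irrefl hw
      · exact hadj ((G.adj_comm v w).mp hw)
    · rcases hw with hw | hw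
      · exact hadj hw
      · exact G.irrefl hw
  have h1 : (G.neighborSet u ∪ G.neighborSet v).ncard =
      (G.neighborSet u).ncard + (G.neighborSet v).ncard :=
    Set.ncard_union_eq hdisj (Set.toFinite _) (Set.toFinite _)
  have h2 : (G.neighborSet u ∪ G.neighborSet v).ncard ≤ (({u, v} : Set V)ᶜ).ncard :=
    Set.ncard_le_ncard hsub (Set.toFinite _)
  have h3 : ({u, v} : Set V).ncard = 2 := Set.ncard_pair huv
  have h4 : ({u, v} : Set V).ncard + (({u, v} : Set V)ᶜ).ncard = Fintype.card V := by
    rw [Set.ncard_add_ncard_compl, Nat.card_eq_fintype_card]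
  have h5 := hmin u
  have h6 := hmin v
  omega

lemma dist_eq_two (hG : G.Connected) (hn : 7 ≤ Fintype.card V)
    (hmin : ∀ v : V, Fintype.card V - 3 ≤ (G.neighborSet v).ncard)
    {u v : V} (huv : u ≠ v) (hadj : ¬ G.Adj u v) : G.dist u v = 2 := by
  obtain ⟨w, h1, h2⟩ := exists_common_nbr hn hmin huv hadj
  have hle : G.dist u v ≤ 2 := by
    calc G.dist u v ≤ G.dist u w + G.dist w v := hG.dist_triangle
    _ ≤ 2 := by
        rw [SimpleGraph.dist_eq_one_iff_adj.mpr h1, SimpleGraph.dist_eq_one_iff_adj.mpr h2]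
  have h0 : G.dist u v ≠ 0 := Nat.pos_iff_ne_zero.mp (hG.pos_dist_of_ne huv)
  have h1' : G.dist u v ≠ 1 := fun h => hadj (SimpleGraph.dist_eq_one_iff_adj.mp h)
  omega

lemma build (hG : G.Connected) (hn : 7 ≤ Fintype.card V)
    (hmin : ∀ v : V, Fintype.card V - 3 ≤ (G.neighborSet v).ncard)
    (C : Set (Set V))
    (hCne : ∀ c ∈ C, c.Nonempty)
    (hCcard : ∀ c ∈ C, c.ncard ≤ 4)
    (hCdisj : ∀ c ∈ C, ∀ d ∈ C, ∀ v : V, v ∈ c → v ∈ d → c = d)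
    (hsum : (⋃₀ C).ncard = C.ncard + 3)
    (hres : ∀ c ∈ C, ∀ u ∈ c, ∀ v ∈ c, u ≠ v →
      ∃ x, x ∉ ⋃₀ C ∧ ((G.Adj x u ∧ ¬ G.Adj x v) ∨ (¬ G.Adj x u ∧ G.Adj x v))) :
    etaP G ≤ Fintype.card V - 3 := by
  classical
  set n := Fintype.card V with hndef
  set R := ⋃₀ C with hRdef
  set P := C ∪ ((fun v => ({v} : Set V)) '' Rᶜ) with hPdef
  have hRc : ∀ c ∈ C, c ⊆ R := fun c hc => Set.subset_sUnion_of_mem hc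
  have hsingle : ∀ x : V, x ∉ R → ({x} : Set V) ∈ P := by
    intro x hx; exact Or.inr ⟨x, hx, rfl⟩
  -- distance helpers
  have hdadj : ∀ u v : V, G.Adj u v → G.dist u v = 1 :=
    fun _ _ h => SimpleGraph.dist_eq_one_iff_adj.mpr h
  -- Partition
  have hpart : Setoid.IsPartition P := by
    constructor
    · rintro (h | ⟨x, hx, heq⟩)
      · exact Set.not_nonempty_empty (hCne _ h)
      · exact (Set.singleton_ne_empty x) heq
    · intro a
      by_cases ha : a ∈ R
      · obtain ⟨c, hc, hac⟩ := ha
        refine ⟨c, ⟨Or.inl hc, hac⟩, ?_⟩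
        rintro b ⟨(hb | ⟨x, hx, rfl⟩), hab⟩
        · exact hCdisj b hb c hc a hab hac
        · exact absurd (hRc c hc hac) (by rw [show a = x from hab]; exact hx)
      · refine ⟨{a}, ⟨hsingle a ha, rfl⟩, ?_⟩
        rintro b ⟨(hb | ⟨x, hx, rfl⟩), hab⟩
        · exact absurd (hRc b hb hab) ha
        · exact congrArg (fun v => ({v} : Set V)) (show a = x from hab).symm
  -- Resolving
  have hresfam : IsResolvingFam G P := by
    intro u v huv
    by_cases hu : u ∈ R
    · obtain ⟨c, hc, huc⟩ := hu
      by_cases hvc : v ∈ c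
      · obtain ⟨x, hxR, hxor⟩ := hres c hc u huc v hvc huv
        have hxu : x ≠ u := fun h => hxR (h ▸ hRc c hc huc)
        have hxv : x ≠ v := fun h => hxR (h ▸ hRc c hc hvc)
        refine ⟨{x}, hsingle x hxR, ?_⟩
        rw [pdist_singleton, pdist_singleton]
        rcases hxor with ⟨h1, h2⟩ | ⟨h1, h2⟩
        · rw [hdadj u x ((G.adj_comm x u).mp h1),
            dist_eq_two hG hn hmin (Ne.symm hxv) (fun h => h2 ((G.adj_comm v x).mp h))]
          omega
        · rw [hdadj v x ((G.adj_comm x v).mp h2),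
            dist_eq_two hG hn hmin (Ne.symm hxu) (fun h => h1 ((G.adj_comm u x).mp h))]
          omega
      · refine ⟨c, Or.inl hc, ?_⟩
        rw [pdist_zero G huc]
        exact (pdist_ne_zero hG (hCne c hc) hvc).symm
    · refine ⟨{u}, hsingle u hu, ?_⟩
      rw [pdist_zero G (Set.mem_singleton u)]
      exact (pdist_ne_zero hG (Set.singleton_nonempty u)
        (fun h => huv (Set.mem_singleton_iff.mp h).symm)).symm
  -- Dominating
  have hdomfam : IsDominatingFam G P := by
    intro v
    have hkey : ∃ w, G.Adj v w ∧ ∀ c ∈ C, v ∈ c → w ∉ c := by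
      by_cases hv : v ∈ R
      · obtain ⟨c, hc, hvc⟩ := hv
        have : ∃ w ∈ G.neighborSet v, w ∉ c := by
          by_contra h
          push_neg at h
          have hsub : G.neighborSet v ⊆ c \ {v} := by
            intro w hw
            exact ⟨h w hw, fun heq => G.irrefl (Set.mem_singleton_iff.mp heq ▸ hw)⟩
          have h1 : (G.neighborSet v).ncard ≤ (c \ {v}).ncard :=
            Set.ncard_le_ncard hsub (Set.toFinite _)
          have h2 : (c \ {v}).ncard = c.ncard - 1 :=
            Set.ncard_diff_singleton_of_mem hvc
          have := hmin v
          have := hCcard c hc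
          omega
        obtain ⟨w, hw1, hw2⟩ := this
        refine ⟨w, hw1, ?_⟩
        intro c' hc' hvc'
        rwa [hCdisj c' hc' c hc v hvc' hvc]
      · have : (G.neighborSet v).Nonempty := by
          rw [← Set.ncard_pos (Set.toFinite _)]
          have := hmin v
          omega
        obtain ⟨w, hw⟩ := this
        exact ⟨w, hw, fun c hc hvc => absurd (hRc c hc hvc) hv⟩
    obtain ⟨w, hadj, hsep⟩ := hkey
    by_cases hw : w ∈ R
    · obtain ⟨c', hc', hwc'⟩ := hw
      have hvc' : v ∉ c' := fun h => hsep c' hc' h hwc'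
      exact ⟨c', Or.inl hc', pdist_one hG hvc' hwc' hadj⟩
    · refine ⟨{w}, hsingle w hw, ?_⟩
      have hvw : v ∉ ({w} : Set V) := fun h => G.irrefl ((Set.mem_singleton_iff.mp h) ▸ hadj)
      exact pdist_one hG hvw rfl hadj
  -- Cardinality
  have hcard : P.ncard = n - 3 := by
    have hdisj : Disjoint C ((fun v => ({v} : Set V)) '' Rᶜ) := by
      rw [Set.disjoint_left]
      rintro c hc ⟨x, hx, rfl⟩
      exact hx (hRc _ hc rfl)
    have h1 : P.ncard = C.ncard + ((fun v => ({v} : Set V)) '' Rᶜ).ncard :=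
      Set.ncard_union_eq hdisj (Set.toFinite _) (Set.toFinite _)
    have h2 : ((fun v => ({v} : Set V)) '' Rᶜ).ncard = (Rᶜ).ncard :=
      Set.ncard_image_of_injective _ Set.singleton_injective
    have h3 : R.ncard + (Rᶜ).ncard = n := by
      rw [Set.ncard_add_ncard_compl, Nat.card_eq_fintype_card]
    have h4 : R.ncard = C.ncard + 3 := hsum
    omega
  exact Nat.sInf_le ⟨P, hpart, hresfam, hdomfam, hcard⟩

variable {H : SimpleGraph V}

lemma xorsym {x u v : V} (h : (H.Adj x u ∧ ¬H.Adj x v) ∨ (¬H.Adj x u ∧ H.Adj x v)) :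
    (H.Adj x v ∧ ¬H.Adj x u) ∨ (¬H.Adj x v ∧ H.Adj x u) := by tauto

def EProp (H : SimpleGraph V) (C : Set (Set V)) : Prop :=
  (∀ c ∈ C, c.Nonempty) ∧ (∀ c ∈ C, c.ncard ≤ 4) ∧
  (∀ c ∈ C, ∀ d ∈ C, ∀ v : V, v ∈ c → v ∈ d → c = d) ∧
  (⋃₀ C).ncard = C.ncard + 3 ∧
  (∀ c ∈ C, ∀ u ∈ c, ∀ v ∈ c, u ≠ v →
    ∃ x, x ∉ ⋃₀ C ∧ ((H.Adj x u ∧ ¬ H.Adj x v) ∨ (¬ H.Adj x u ∧ H.Adj x v)))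

lemma ncard3 {a b c : V} (h1 : a ≠ b) (h2 : a ≠ c) (h3 : b ≠ c) :
    ({a, b, c} : Set V).ncard = 3 := by
  rw [Set.ncard_insert_of_notMem (by simp [h1, h2]) (Set.toFinite _), Set.ncard_pair h3]

lemma ncard4 {a b c d : V} (h1 : a ≠ b) (h2 : a ≠ c) (h3 : a ≠ d) (h4 : b ≠ c) (h5 : b ≠ d)
    (h6 : c ≠ d) : ({a, b, c, d} : Set V).ncard = 4 := by
  rw [Set.ncard_insert_of_notMem (by simp [h1, h2, h3]) (Set.toFinite _), ncard3 h4 h5 h6]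

lemma finish4 {a b c d : V}
    (hab : a ≠ b) (hac : a ≠ c) (had : a ≠ d) (hbc : b ≠ c) (hbd : b ≠ d) (hcd : c ≠ d)
    (pab : ∃ x, x ∉ ({a,b,c,d} : Set V) ∧ ((H.Adj x a ∧ ¬H.Adj x b) ∨ (¬H.Adj x a ∧ H.Adj x b)))
    (pac : ∃ x, x ∉ ({a,b,c,d} : Set V) ∧ ((H.Adj x a ∧ ¬H.Adj x c) ∨ (¬H.Adj x a ∧ H.Adj x c)))
    (pad : ∃ x, x ∉ ({a,b,c,d} : Set V) ∧ ((H.Adj x a ∧ ¬H.Adj x d) ∨ (¬H.Adj x a ∧ H.Adj x d)))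
    (pbc : ∃ x, x ∉ ({a,b,c,d} : Set V) ∧ ((H.Adj x b ∧ ¬H.Adj x c) ∨ (¬H.Adj x b ∧ H.Adj x c)))
    (pbd : ∃ x, x ∉ ({a,b,c,d} : Set V) ∧ ((H.Adj x b ∧ ¬H.Adj x d) ∨ (¬H.Adj x b ∧ H.Adj x d)))
    (pcd : ∃ x, x ∉ ({a,b,c,d} : Set V) ∧ ((H.Adj x c ∧ ¬H.Adj x d) ∨ (¬H.Adj x c ∧ H.Adj x d))) :
    ∃ C : Set (Set V), EProp H C := by
  refine ⟨{({a,b,c,d} : Set V)}, ?_, ?_, ?_, ?_, ?_⟩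
  · rintro c' hc'
    rw [Set.mem_singleton_iff] at hc'
    subst hc'
    exact ⟨a, by simp⟩
  · rintro c' hc'
    rw [Set.mem_singleton_iff] at hc'
    subst hc'
    exact (ncard4 hab hac had hbc hbd hcd).le
  · rintro c' hc' d' hd' v _ _
    rw [Set.mem_singleton_iff] at hc' hd'
    rw [hc', hd']
  · simp only [Set.sUnion_singleton, Set.ncard_singleton]
    rw [ncard4 hab hac had hbc hbd hcd]
  · intro c' hc' u hu v hv huv
    rw [Set.mem_singleton_iff] at hc'
    subst hc'
    simp only [Set.sUnion_singleton]
    simp only [Set.mem_insert_iff, Set.mem_singleton_iff] at hu hv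
    obtain ⟨x1, hx1, q1⟩ := pab
    obtain ⟨x2, hx2, q2⟩ := pac
    obtain ⟨x3, hx3, q3⟩ := pad
    obtain ⟨x4, hx4, q4⟩ := pbc
    obtain ⟨x5, hx5, q5⟩ := pbd
    obtain ⟨x6, hx6, q6⟩ := pcd
    rcases hu with rfl | rfl | rfl | rfl <;> rcases hv with rfl | rfl | rfl | rfl <;>
      first
        | exact absurd rfl huv
        | exact ⟨x1, hx1, q1⟩
        | exact ⟨x2, hx2, q2⟩
        | exact ⟨x3, hx3, q3⟩
        | exact ⟨x4, hx4, q4⟩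
        | exact ⟨x5, hx5, q5⟩
        | exact ⟨x6, hx6, q6⟩
        | exact ⟨x1, hx1, xorsym q1⟩
        | exact ⟨x2, hx2, xorsym q2⟩
        | exact ⟨x3, hx3, xorsym q3⟩
        | exact ⟨x4, hx4, xorsym q4⟩
        | exact ⟨x5, hx5, xorsym q5⟩
        | exact ⟨x6, hx6, xorsym q6⟩

lemma finish32 {a1 a2 a3 b1 b2 : V}
    (h12 : a1 ≠ a2) (h13 : a1 ≠ a3) (h23 : a2 ≠ a3) (hb : b1 ≠ b2)
    (hd11 : a1 ≠ b1) (hd12 : a1 ≠ b2) (hd21 : a2 ≠ b1) (hd22 : a2 ≠ b2)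
    (hd31 : a3 ≠ b1) (hd32 : a3 ≠ b2)
    (p12 : ∃ x, x ∉ ({a1,a2,a3,b1,b2} : Set V) ∧
      ((H.Adj x a1 ∧ ¬H.Adj x a2) ∨ (¬H.Adj x a1 ∧ H.Adj x a2)))
    (p13 : ∃ x, x ∉ ({a1,a2,a3,b1,b2} : Set V) ∧
      ((H.Adj x a1 ∧ ¬H.Adj x a3) ∨ (¬H.Adj x a1 ∧ H.Adj x a3)))
    (p23 : ∃ x, x ∉ ({a1,a2,a3,b1,b2} : Set V) ∧
      ((H.Adj x a2 ∧ ¬H.Adj x a3) ∨ (¬H.Adj x a2 ∧ H.Adj x a3)))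
    (pb : ∃ x, x ∉ ({a1,a2,a3,b1,b2} : Set V) ∧
      ((H.Adj x b1 ∧ ¬H.Adj x b2) ∨ (¬H.Adj x b1 ∧ H.Adj x b2))) :
    ∃ C : Set (Set V), EProp H C := by
  have hAB : ({a1,a2,a3} : Set V) ≠ ({b1,b2} : Set V) := by
    intro h
    have : a1 ∈ ({b1,b2} : Set V) := h ▸ (by simp : a1 ∈ ({a1,a2,a3} : Set V))
    simp only [Set.mem_insert_iff, Set.mem_singleton_iff] at this
    rcases this with h' | h'
    · exact hd11 h'
    · exact hd12 h'
  have hunion : ({a1,a2,a3} : Set V) ∪ ({b1,b2} : Set V) = ({a1,a2,a3,b1,b2} : Set V) := by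
    ext w; simp; tauto
  refine ⟨{({a1,a2,a3} : Set V), ({b1,b2} : Set V)}, ?_, ?_, ?_, ?_, ?_⟩
  · rintro c' (rfl | hc')
    · exact ⟨a1, by simp⟩
    · rw [Set.mem_singleton_iff] at hc'
      subst hc'
      exact ⟨b1, by simp⟩
  · rintro c' (rfl | hc')
    · rw [ncard3 h12 h13 h23]; omega
    · rw [Set.mem_singleton_iff] at hc'
      subst hc'
      rw [Set.ncard_pair hb]; omega
  · have key : ∀ v : V, v ∈ ({a1,a2,a3} : Set V) → v ∈ ({b1,b2} : Set V) → False := by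
      intro v hv1 hv2
      simp only [Set.mem_insert_iff, Set.mem_singleton_iff] at hv1 hv2
      rcases hv1 with rfl | rfl | rfl <;> rcases hv2 with h | h <;>
        first
          | exact hd11 h | exact hd12 h | exact hd21 h | exact hd22 h
          | exact hd31 h | exact hd32 h
    rintro c' (rfl | hc') d' (rfl | hd') v hvc hvd
    · rfl
    · rw [Set.mem_singleton_iff] at hd'; subst hd'
      exact absurd (key v hvc hvd) not_false
    · rw [Set.mem_singleton_iff] at hc'; subst hc'
      exact absurd (key v hvd hvc) not_false
    · rw [Set.mem_singleton_iff] at hc' hd'; rw [hc', hd']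
  · rw [Set.sUnion_insert, Set.sUnion_singleton, hunion]
    rw [Set.ncard_pair hAB]
    rw [Set.ncard_insert_of_notMem (by simp [h12, h13, hd11, hd12]) (Set.toFinite _),
      Set.ncard_insert_of_notMem (by simp [h23, hd21, hd22]) (Set.toFinite _),
      Set.ncard_insert_of_notMem (by simp [hd31, hd32]) (Set.toFinite _),
      Set.ncard_pair hb]
  · intro c' hc' u hu v hv huv
    rw [Set.sUnion_insert, Set.sUnion_singleton, hunion]
    obtain ⟨x1, hx1, q1⟩ := p12
    obtain ⟨x2, hx2, q2⟩ := p13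
    obtain ⟨x3, hx3, q3⟩ := p23
    obtain ⟨x4, hx4, q4⟩ := pb
    rcases hc' with rfl | hc'
    · simp only [Set.mem_insert_iff, Set.mem_singleton_iff] at hu hv
      rcases hu with rfl | rfl | rfl <;> rcases hv with rfl | rfl | rfl <;>
        first
          | exact absurd rfl huv
          | exact ⟨x1, hx1, q1⟩
          | exact ⟨x2, hx2, q2⟩
          | exact ⟨x3, hx3, q3⟩
          | exact ⟨x1, hx1, xorsym q1⟩
          | exact ⟨x2, hx2, xorsym q2⟩
          | exact ⟨x3, hx3, xorsym q3⟩
    · rw [Set.mem_singleton_iff] at hc'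
      subst hc'
      simp only [Set.mem_insert_iff, Set.mem_singleton_iff] at hu hv
      rcases hu with rfl | rfl <;> rcases hv with rfl | rfl <;>
        first
          | exact absurd rfl huv
          | exact ⟨x4, hx4, q4⟩
          | exact ⟨x4, hx4, xorsym q4⟩

lemma pick_out {F : Set V} (h : F.ncard < Fintype.card V) : ∃ x, x ∉ F := by
  by_contra h'
  push_neg at h'
  rw [Set.eq_univ_of_forall h', Set.ncard_univ, Nat.card_eq_fintype_card] at h
  omega

lemma pick_in {N F : Set V} (hN : 5 ≤ N.ncard) (hF : F.ncard ≤ 4) : ∃ x ∈ N, x ∉ F := by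
  by_contra h'
  push_neg at h'
  have := Set.ncard_le_ncard h' (Set.toFinite _)
  omega

lemma existsC (hn : 7 ≤ Fintype.card V)
    (hdeg : ∀ v : V, (H.neighborSet v).ncard ≤ 2)
    (hN : 5 ≤ {v : V | (H.neighborSet v).Nonempty}.ncard) :
    ∃ C : Set (Set V), EProp H C := by
  classical
  have hdeg3 : ∀ v a b c : V, H.Adj v a → H.Adj v b → H.Adj v c → a = b ∨ a = c ∨ b = c := by
    intro v a b c ha hb hc
    by_contra hcon
    push_neg at hcon
    obtain ⟨h1, h2, h3⟩ := hcon
    have hsub : ({a, b, c} : Set V) ⊆ H.neighborSet v := by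
      intro w hw
      simp only [Set.mem_insert_iff, Set.mem_singleton_iff] at hw
      rcases hw with rfl | rfl | rfl <;> assumption
    have hle := Set.ncard_le_ncard hsub (Set.toFinite _)
    rw [ncard3 h1 h2 h3] at hle
    have := hdeg v
    omega
  by_cases hd2 : ∃ y x z : V, x ≠ z ∧ H.Adj y x ∧ H.Adj y z
  · obtain ⟨y, x, z, hxz, hyx, hyz⟩ := hd2
    have hNy : ∀ w, H.Adj y w → w = x ∨ w = z := by
      intro w hw
      rcases hdeg3 y w x z hw hyx hyz with h | h | h
      · exact Or.inl h
      · exact Or.inr h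
      · exact absurd h hxz
    by_cases hp : ∃ p r : V, p ≠ x ∧ p ≠ y ∧ p ≠ z ∧ H.Adj p r ∧ r ≠ x ∧ r ≠ z
    · -- MAIN CASE: classes {x,p,s} and {z,t}
      obtain ⟨p, r, hpx, hpy, hpz, hpr, hrx, hrz⟩ := hp
      have hry : r ≠ y := by
        rintro rfl
        rcases hNy p hpr.symm with rfl | rfl
        · exact hpx rfl
        · exact hpz rfl
      have hrp : r ≠ p := hpr.ne'
      have hyp' : ¬ H.Adj y p := fun h => by
        rcases hNy p h with rfl | rfl
        · exact hpx rfl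
        · exact hpz rfl
      -- choose s outside {x,y,z,p,r} ∪ (N(r) \ {p})
      have hcards : (({x, y, z, p, r} : Set V) ∪ (H.neighborSet r \ {p})).ncard < 7 := by
        have h1 : (({x, y, z, p, r} : Set V)).ncard ≤ 5 := by
          calc ({x, y, z, p, r} : Set V).ncard
              ≤ ({y, z, p, r} : Set V).ncard + 1 := Set.ncard_insert_le _ _
            _ ≤ (({z, p, r} : Set V).ncard + 1) + 1 := by
                have := Set.ncard_insert_le y ({z, p, r} : Set V); omega
            _ ≤ ((({p, r} : Set V).ncard + 1) + 1) + 1 := by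
                have := Set.ncard_insert_le z ({p, r} : Set V); omega
            _ ≤ 5 := by
                have := Set.ncard_insert_le p ({r} : Set V)
                have := Set.ncard_singleton r
                omega
        have h2 : (H.neighborSet r \ {p}).ncard ≤ 1 := by
          have hm : p ∈ H.neighborSet r := hpr.symm
          have := Set.ncard_diff_singleton_of_mem hm
          have := hdeg r
          omega
        have := Set.ncard_union_le ({x, y, z, p, r} : Set V) (H.neighborSet r \ {p})
        omega
      obtain ⟨s, hs⟩ := pick_out (lt_of_lt_of_le hcards hn)
      simp only [Set.mem_union, Set.mem_insert_iff, Set.mem_singleton_iff, Set.mem_diff,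
        SimpleGraph.mem_neighborSet, not_or, not_and, not_not] at hs
      obtain ⟨⟨hsx, hsy, hsz, hsp, hsr⟩, hsnbr⟩ := hs
      have hrs : ¬ H.Adj r s := fun h => hsp (hsnbr h)
      -- choose t outside {x,y,z,p,r,s}
      have hcardt : (({x, y, z, p, r, s} : Set V)).ncard < 7 := by
        have h1 : ({x, y, z, p, r, s} : Set V).ncard ≤ 6 := by
          calc ({x, y, z, p, r, s} : Set V).ncard
              ≤ ({y, z, p, r, s} : Set V).ncard + 1 := Set.ncard_insert_le _ _
            _ ≤ (({z, p, r, s} : Set V).ncard + 1) + 1 := by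
                have := Set.ncard_insert_le y ({z, p, r, s} : Set V); omega
            _ ≤ ((({p, r, s} : Set V).ncard + 1) + 1) + 1 := by
                have := Set.ncard_insert_le z ({p, r, s} : Set V); omega
            _ ≤ (((({r, s} : Set V).ncard + 1) + 1) + 1) + 1 := by
                have := Set.ncard_insert_le p ({r, s} : Set V); omega
            _ ≤ 6 := by
                have := Set.ncard_insert_le r ({s} : Set V)
                have := Set.ncard_singleton s
                omega
        omega
      obtain ⟨t, ht⟩ := pick_out (lt_of_lt_of_le hcardt hn)
      simp only [Set.mem_insert_iff, Set.mem_singleton_iff, not_or] at ht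
      obtain ⟨htx, hty, htz, htp, htr, hts⟩ := ht
      have hyt : ¬ H.Adj y t := fun h => by
        rcases hNy t h with rfl | rfl
        · exact htx rfl
        · exact htz rfl
      have hys : ¬ H.Adj y s := fun h => by
        rcases hNy s h with rfl | rfl
        · exact hsx rfl
        · exact hsz rfl
      have hymem : y ∉ ({x, p, s, z, t} : Set V) := by
        simp only [Set.mem_insert_iff, Set.mem_singleton_iff, not_or]
        exact ⟨hyx.ne, Ne.symm hpy, Ne.symm hsy, hyz.ne, Ne.symm hty⟩
      have hrmem : r ∉ ({x, p, s, z, t} : Set V) := by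
        simp only [Set.mem_insert_iff, Set.mem_singleton_iff, not_or]
        exact ⟨hrx, hrp, Ne.symm hsr, hrz, Ne.symm htr⟩
      exact finish32 (a1 := x) (a2 := p) (a3 := s) (b1 := z) (b2 := t)
        (Ne.symm hpx) (Ne.symm hsx) (Ne.symm hsp) (Ne.symm htz) hxz (Ne.symm htx) hpz
        (Ne.symm htp) hsz (Ne.symm hts)
        ⟨y, hymem, Or.inl ⟨hyx, hyp'⟩⟩
        ⟨y, hymem, Or.inl ⟨hyx, hys⟩⟩
        ⟨r, hrmem, Or.inl ⟨hpr.symm, hrs⟩⟩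
        ⟨y, hymem, Or.inl ⟨hyz, hyt⟩⟩
    · -- P5 CASE
      push_neg at hp
      -- hp : ∀ p r, p ≠ x → p ≠ y → p ≠ z → H.Adj p r → r ≠ x → r = z
      have hout : ∀ q w : V, q ≠ x → q ≠ y → q ≠ z → H.Adj q w → w = x ∨ w = z := by
        intro q w h1 h2 h3 h4
        by_cases hwx : w = x
        · exact Or.inl hwx
        · exact Or.inr (hp q w h1 h2 h3 h4 hwx)
      obtain ⟨p1, hp1N, hp1F⟩ := pick_in hN (F := ({x, y, z} : Set V)) (by
        have h1 := Set.ncard_insert_le x ({y, z} : Set V)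
        have h2 := Set.ncard_insert_le y ({z} : Set V)
        have h3 := Set.ncard_singleton z
        omega)
      simp only [Set.mem_insert_iff, Set.mem_singleton_iff, not_or] at hp1F
      obtain ⟨hp1x, hp1y, hp1z⟩ := hp1F
      obtain ⟨w1, hw1⟩ := hp1N
      rw [SimpleGraph.mem_neighborSet] at hw1
      have hw1' : w1 = x ∨ w1 = z := hout p1 w1 hp1x hp1y hp1z hw1
      obtain ⟨p2, hp2N, hp2F⟩ := pick_in hN (F := ({x, y, z, p1} : Set V)) (by
        have h1 := Set.ncard_insert_le x ({y, z, p1} : Set V)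
        have h2 := Set.ncard_insert_le y ({z, p1} : Set V)
        have h3 := Set.ncard_insert_le z ({p1} : Set V)
        have h4 := Set.ncard_singleton p1
        omega)
      simp only [Set.mem_insert_iff, Set.mem_singleton_iff, not_or] at hp2F
      obtain ⟨hp2x, hp2y, hp2z, hp2p1⟩ := hp2F
      obtain ⟨w2, hw2⟩ := hp2N
      rw [SimpleGraph.mem_neighborSet] at hw2
      have hw2' : w2 = x ∨ w2 = z := hout p2 w2 hp2x hp2y hp2z hw2
      have key : ∃ q1 q2 : V, q1 ≠ x ∧ q1 ≠ y ∧ q1 ≠ z ∧ q2 ≠ x ∧ q2 ≠ y ∧ q2 ≠ z ∧ q1 ≠ q2 ∧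
          H.Adj q1 x ∧ ¬ H.Adj q1 z ∧ H.Adj q2 z ∧ ¬ H.Adj q2 x := by
        rcases hw1' with h1 | h1
        · -- p1 adj x
          have a1x : H.Adj p1 x := h1 ▸ hw1
          have hp2adj : H.Adj p2 z := by
            rcases hw2' with h2 | h2
            · exfalso
              rcases hdeg3 x y p1 p2 hyx.symm a1x.symm (h2 ▸ hw2).symm with h | h | h
              · exact hp1y h.symm
              · exact hp2y h.symm
              · exact hp2p1 h.symm
            · exact h2 ▸ hw2
          have hp1nz : ¬ H.Adj p1 z := by
            intro hzz
            rcases hdeg3 z y p1 p2 hyz.symm hzz.symm hp2adj.symm with h | h | h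
            · exact hp1y h.symm
            · exact hp2y h.symm
            · exact hp2p1 h.symm
          have hp2nx : ¬ H.Adj p2 x := by
            intro hxx
            rcases hdeg3 x y p1 p2 hyx.symm a1x.symm hxx.symm with h | h | h
            · exact hp1y h.symm
            · exact hp2y h.symm
            · exact hp2p1 h.symm
          exact ⟨p1, p2, hp1x, hp1y, hp1z, hp2x, hp2y, hp2z, Ne.symm hp2p1,
            a1x, hp1nz, hp2adj, hp2nx⟩
        · -- p1 adj z
          have a1z : H.Adj p1 z := h1 ▸ hw1
          have hp2adjx : H.Adj p2 x := by
            rcases hw2' with h2 | h2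
            · exact h2 ▸ hw2
            · exfalso
              rcases hdeg3 z y p1 p2 hyz.symm a1z.symm (h2 ▸ hw2).symm with h | h | h
              · exact hp1y h.symm
              · exact hp2y h.symm
              · exact hp2p1 h.symm
          have hp2nz : ¬ H.Adj p2 z := by
            intro hzz
            rcases hdeg3 z y p1 p2 hyz.symm a1z.symm hzz.symm with h | h | h
            · exact hp1y h.symm
            · exact hp2y h.symm
            · exact hp2p1 h.symm
          have hp1nx : ¬ H.Adj p1 x := by
            intro hxx
            rcases hdeg3 x y p2 p1 hyx.symm hp2adjx.symm hxx.symm with h | h | h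
            · exact hp2y h.symm
            · exact hp1y h.symm
            · exact hp2p1 h
          exact ⟨p2, p1, hp2x, hp2y, hp2z, hp1x, hp1y, hp1z, hp2p1,
            hp2adjx, hp2nz, a1z, hp1nx⟩
      obtain ⟨q1, q2, hq1x, hq1y, hq1z, hq2x, hq2y, hq2z, hq12, aq1x, nq1z, aq2z, nq2x⟩ := key
      -- pick isolated-ish i
      have hcardi : ({x, y, z, q1, q2} : Set V).ncard < 7 := by
        have h1 := Set.ncard_insert_le x ({y, z, q1, q2} : Set V)
        have h2 := Set.ncard_insert_le y ({z, q1, q2} : Set V)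
        have h3 := Set.ncard_insert_le z ({q1, q2} : Set V)
        have h4 := Set.ncard_insert_le q1 ({q2} : Set V)
        have h5 := Set.ncard_singleton q2
        omega
      obtain ⟨i, hi⟩ := pick_out (lt_of_lt_of_le hcardi hn)
      simp only [Set.mem_insert_iff, Set.mem_singleton_iff, not_or] at hi
      obtain ⟨hix, hiy, hiz, hiq1, hiq2⟩ := hi
      have hiso : ∀ w, ¬ H.Adj i w := by
        intro w hw
        rcases hout i w hix hiy hiz hw with rfl | rfl
        · rcases hdeg3 w y q1 i hyx.symm aq1x.symm hw.symm with h | h | h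
          · exact hq1y h.symm
          · exact hiy h.symm
          · exact hiq1 h.symm
        · rcases hdeg3 w y q2 i hyz.symm aq2z.symm hw.symm with h | h | h
          · exact hq2y h.symm
          · exact hiy h.symm
          · exact hiq2 h.symm
      have hxmem : x ∉ ({q1, y, q2, i} : Set V) := by
        simp only [Set.mem_insert_iff, Set.mem_singleton_iff, not_or]
        exact ⟨Ne.symm hq1x, hyx.ne', Ne.symm hq2x, Ne.symm hix⟩
      have hzmem : z ∉ ({q1, y, q2, i} : Set V) := by
        simp only [Set.mem_insert_iff, Set.mem_singleton_iff, not_or]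
        exact ⟨Ne.symm hq1z, hyz.ne', Ne.symm hq2z, Ne.symm hiz⟩
      exact finish4 (a := q1) (b := y) (c := q2) (d := i)
        hq1y hq12 (Ne.symm hiq1) (Ne.symm hq2y) (Ne.symm hiy) (Ne.symm hiq2)
        ⟨z, hzmem, Or.inr ⟨fun h => nq1z h.symm, hyz.symm⟩⟩
        ⟨x, hxmem, Or.inl ⟨aq1x.symm, fun h => nq2x h.symm⟩⟩
        ⟨x, hxmem, Or.inl ⟨aq1x.symm, fun h => hiso x h.symm⟩⟩
        ⟨x, hxmem, Or.inl ⟨hyx.symm, fun h => nq2x h.symm⟩⟩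
        ⟨x, hxmem, Or.inl ⟨hyx.symm, fun h => hiso x h.symm⟩⟩
        ⟨z, hzmem, Or.inl ⟨aq2z.symm, fun h => hiso z h.symm⟩⟩
  · -- MATCHING CASE
    push_neg at hd2
    have huniq : ∀ a b c : V, H.Adj a b → H.Adj a c → b = c := by
      intro a b c h1 h2
      by_contra hne
      exact hd2 a b c hne h1 h2
    have hN4 : (4 : ℕ) ≤ 4 := le_refl 4
    obtain ⟨a1, ha1N, _⟩ := pick_in hN (F := (∅ : Set V)) (by simp)
    obtain ⟨b1, hb1⟩ := ha1N
    rw [SimpleGraph.mem_neighborSet] at hb1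
    obtain ⟨a2, ha2N, ha2F⟩ := pick_in hN (F := ({a1, b1} : Set V)) (by
      have := Set.ncard_insert_le a1 ({b1} : Set V)
      have := Set.ncard_singleton b1
      omega)
    simp only [Set.mem_insert_iff, Set.mem_singleton_iff, not_or] at ha2F
    obtain ⟨ha2a1, ha2b1⟩ := ha2F
    obtain ⟨b2, hb2⟩ := ha2N
    rw [SimpleGraph.mem_neighborSet] at hb2
    have hb2a1 : b2 ≠ a1 := by
      intro h
      exact ha2b1 (huniq a1 a2 b1 (h ▸ hb2).symm hb1)
    have hb2b1 : b2 ≠ b1 := by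
      intro h
      exact ha2a1 (huniq b1 a2 a1 (h ▸ hb2).symm hb1.symm)
    obtain ⟨a3, ha3N, ha3F⟩ := pick_in hN (F := ({a1, b1, a2, b2} : Set V)) (by
      have h1 := Set.ncard_insert_le a1 ({b1, a2, b2} : Set V)
      have h2 := Set.ncard_insert_le b1 ({a2, b2} : Set V)
      have h3 := Set.ncard_insert_le a2 ({b2} : Set V)
      have h4 := Set.ncard_singleton b2
      omega)
    simp only [Set.mem_insert_iff, Set.mem_singleton_iff, not_or] at ha3F
    obtain ⟨ha3a1, ha3b1, ha3a2, ha3b2⟩ := ha3F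
    obtain ⟨b3, hb3⟩ := ha3N
    rw [SimpleGraph.mem_neighborSet] at hb3
    have hb3a1 : b3 ≠ a1 := by
      intro h
      exact ha3b1 (huniq a1 a3 b1 (h ▸ hb3).symm hb1)
    have hb3b1 : b3 ≠ b1 := by
      intro h
      exact ha3a1 (huniq b1 a3 a1 (h ▸ hb3).symm hb1.symm)
    have hb3a2 : b3 ≠ a2 := by
      intro h
      exact ha3b2 (huniq a2 a3 b2 (h ▸ hb3).symm hb2)
    have hb3b2 : b3 ≠ b2 := by
      intro h
      exact ha3a2 (huniq b2 a3 a2 (h ▸ hb3).symm hb2.symm)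
    have hcardw : ({a1, b1, a2, b2, a3, b3} : Set V).ncard < 7 := by
      have h1 := Set.ncard_insert_le a1 ({b1, a2, b2, a3, b3} : Set V)
      have h2 := Set.ncard_insert_le b1 ({a2, b2, a3, b3} : Set V)
      have h3 := Set.ncard_insert_le a2 ({b2, a3, b3} : Set V)
      have h4 := Set.ncard_insert_le b2 ({a3, b3} : Set V)
      have h5 := Set.ncard_insert_le a3 ({b3} : Set V)
      have h6 := Set.ncard_singleton b3
      omega
    obtain ⟨w, hw⟩ := pick_out (lt_of_lt_of_le hcardw hn)
    simp only [Set.mem_insert_iff, Set.mem_singleton_iff, not_or] at hw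
    obtain ⟨hwa1, hwb1, hwa2, hwb2, hwa3, hwb3⟩ := hw
    -- class {a1, b2, a3, w}, witnesses b1, a2, b3
    have hb1mem : b1 ∉ ({a1, b2, a3, w} : Set V) := by
      simp only [Set.mem_insert_iff, Set.mem_singleton_iff, not_or]
      exact ⟨hb1.ne', Ne.symm hb2b1, Ne.symm ha3b1, Ne.symm hwb1⟩
    have ha2mem : a2 ∉ ({a1, b2, a3, w} : Set V) := by
      simp only [Set.mem_insert_iff, Set.mem_singleton_iff, not_or]
      exact ⟨ha2a1, hb2.ne, Ne.symm ha3a2, Ne.symm hwa2⟩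
    have hb3mem : b3 ∉ ({a1, b2, a3, w} : Set V) := by
      simp only [Set.mem_insert_iff, Set.mem_singleton_iff, not_or]
      exact ⟨hb3a1, hb3b2, hb3.ne', Ne.symm hwb3⟩
    have nb1b2 : ¬ H.Adj b1 b2 := by
      intro h
      exact hb2a1 (huniq b1 b2 a1 h hb1.symm)
    have nb1a3 : ¬ H.Adj b1 a3 := by
      intro h
      exact ha3a1 (huniq b1 a3 a1 h hb1.symm)
    have nb1w : ¬ H.Adj b1 w := by
      intro h
      exact hwa1 (huniq b1 w a1 h hb1.symm)
    have na2a3 : ¬ H.Adj a2 a3 := by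
      intro h
      exact ha3b2 (huniq a2 a3 b2 h hb2)
    have na2w : ¬ H.Adj a2 w := by
      intro h
      exact hwb2 (huniq a2 w b2 h hb2)
    have nb3w : ¬ H.Adj b3 w := by
      intro h
      exact hwa3 (huniq b3 w a3 h hb3.symm)
    exact finish4 (a := a1) (b := b2) (c := a3) (d := w)
      (Ne.symm hb2a1) (Ne.symm ha3a1) (Ne.symm hwa1) (Ne.symm ha3b2) (Ne.symm hwb2)
      (Ne.symm hwa3)
      ⟨b1, hb1mem, Or.inl ⟨hb1.symm, nb1b2⟩⟩
      ⟨b1, hb1mem, Or.inl ⟨hb1.symm, nb1a3⟩⟩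
      ⟨b1, hb1mem, Or.inl ⟨hb1.symm, nb1w⟩⟩
      ⟨a2, ha2mem, Or.inl ⟨hb2, na2a3⟩⟩
      ⟨a2, ha2mem, Or.inl ⟨hb2, na2w⟩⟩
      ⟨b3, hb3mem, Or.inl ⟨hb3.symm, nb3w⟩⟩

end AuxStmt15

theorem stmt_15 {V : Type*} [Fintype V] (G : SimpleGraph V) (hG : G.Connected)
    (hn : 7 ≤ Fintype.card V)
    (hmin : ∀ v : V, Fintype.card V - 3 ≤ (G.neighborSet v).ncard)
    (hbig : {v : V | (G.neighborSet v).ncard = Fintype.card V - 1}.ncard ≤ Fintype.card V - 5) :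
    etaP G ≤ Fintype.card V - 3 := by
  classical
  have hnsum : ∀ v : V, (G.neighborSet v).ncard + (Gᶜ.neighborSet v).ncard + 1
      = Fintype.card V := by
    intro v
    have hcompl : Gᶜ.neighborSet v = (insert v (G.neighborSet v))ᶜ := by
      ext w
      simp only [SimpleGraph.mem_neighborSet, SimpleGraph.compl_adj, Set.mem_compl_iff,
        Set.mem_insert_iff, not_or, ne_eq]
      constructor
      · rintro ⟨h1, h2⟩
        exact ⟨fun h => h1 h.symm, h2⟩
      · rintro ⟨h1, h2⟩
        exact ⟨fun h => h1 h.symm, h2⟩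
    have h2 : (insert v (G.neighborSet v)).ncard = (G.neighborSet v).ncard + 1 :=
      Set.ncard_insert_of_notMem (fun h => G.irrefl h) (Set.toFinite _)
    have h1 : (insert v (G.neighborSet v)).ncard + ((insert v (G.neighborSet v))ᶜ).ncard
        = Fintype.card V := by
      rw [Set.ncard_add_ncard_compl, Nat.card_eq_fintype_card]
    rw [hcompl]
    omega
  have hdeg : ∀ v : V, ((Gᶜ).neighborSet v).ncard ≤ 2 := by
    intro v
    have := hnsum v
    have := hmin v
    omega
  have hNbig : 5 ≤ {v : V | ((Gᶜ).neighborSet v).Nonempty}.ncard := by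
    have hsub : ({v : V | (G.neighborSet v).ncard = Fintype.card V - 1})ᶜ ⊆
        {v : V | ((Gᶜ).neighborSet v).Nonempty} := by
      intro v hv
      simp only [Set.mem_compl_iff, Set.mem_setOf_eq] at hv ⊢
      rw [← Set.ncard_pos (Set.toFinite _)]
      have := hnsum v
      omega
    have h1 : ({v : V | (G.neighborSet v).ncard = Fintype.card V - 1}).ncard +
        (({v : V | (G.neighborSet v).ncard = Fintype.card V - 1})ᶜ).ncard = Fintype.card V := by
      rw [Set.ncard_add_ncard_compl, Nat.card_eq_fintype_card]
    have h2 := Set.ncard_le_ncard hsub (Set.toFinite _)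
    omega
  obtain ⟨C, hC1, hC2, hC3, hC4, hC5⟩ := existsC (H := Gᶜ) hn hdeg hNbig
  apply build hG hn hmin C hC1 hC2 hC3 hC4
  intro c hc u hu v hv huv
  obtain ⟨x, hx, hcase⟩ := hC5 c hc u hu v hv huv
  refine ⟨x, hx, ?_⟩
  have hxu : x ≠ u := fun h => hx (h ▸ Set.mem_sUnion_of_mem hu hc)
  have hxv : x ≠ v := fun h => hx (h ▸ Set.mem_sUnion_of_mem hv hc)
  rcases hcase with ⟨h1, h2⟩ | ⟨h1, h2⟩
  · refine Or.inr ⟨((SimpleGraph.compl_adj _ _ _).mp h1).2, ?_⟩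
    by_contra hng
    exact h2 ((SimpleGraph.compl_adj _ _ _).mpr ⟨hxv, hng⟩)
  · refine Or.inl ⟨?_, ((SimpleGraph.compl_adj _ _ _).mp h2).2⟩
    by_contra hng
    exact h1 ((SimpleGraph.compl_adj _ _ _).mpr ⟨hxu, hng⟩)
end
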